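/- Let A and A' be (possibly non-unital) associative K-algebras, (ρ, μ) an associative representation of A on A', and D : A → A' a crossed homomorphism. Define ρ^D, μ^D : A → End(A') by ρ^D(x)(u) = ρ(x)u + D(x)·u and μ^D(x)(u) = μ(x)u + u·D(x). Then (A'; ρ^D, μ^D) is an associative representation of A; in particular, for all x, y ∈ A and u, v ∈ A': ρ^D(x·y) = ρ^D(x)∘ρ^D(y), μ^D(x·y) = μ^D(y)∘μ^D(x), ρ^D(x)∘μ^D(y) = μ^D(y)∘ρ^D(x), ρ^D(x)(u·v) = (ρ^D(x)u)·v, u·(ρ^D(x)v) = (μ^D(x)u)·v, and u·(μ^D(x)v) = μ^D(x)(u·v). -/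
import Mathlib


/-- `ρ^D(x)(u) = ρ(x)u + D(x)·u`. -/
def rhoD {K : Type*} [Field K] {A A' : Type*}
    [AddCommGroup A] [Module K A] [AddCommGroup A'] [Module K A']
    (m' : A' →ₗ[K] A' →ₗ[K] A') (ρ : A →ₗ[K] A' →ₗ[K] A')
    (D : A →ₗ[K] A') (x : A) (u : A') : A' :=
  ρ x u + m' (D x) u

/-- `μ^D(x)(u) = μ(x)u + u·D(x)`. -/
def muD {K : Type*} [Field K] {A A' : Type*}
    [AddCommGroup A] [Module K A] [AddCommGroup A'] [Module K A']
    (m' : A' →ₗ[K] A' →ₗ[K] A') (μ : A →ₗ[K] A' →ₗ[K] A')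
    (D : A →ₗ[K] A') (x : A) (u : A') : A' :=
  μ x u + m' u (D x)

/-- if `D` is a crossed homomorphism, then `(A'; ρ^D, μ^D)` is an
associative representation of `A` on `A'`. -/
theorem stmt6 {K : Type*} [Field K] {A A' : Type*}
    [AddCommGroup A] [Module K A] [AddCommGroup A'] [Module K A']
    (m : A →ₗ[K] A →ₗ[K] A) (m' : A' →ₗ[K] A' →ₗ[K] A')
    (assocA : ∀ x y z : A, m (m x y) z = m x (m y z))
    (assocA' : ∀ u v w : A', m' (m' u v) w = m' u (m' v w))
    (ρ μ : A →ₗ[K] A' →ₗ[K] A')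
    (hρ : ∀ (x y : A) (u : A'), ρ (m x y) u = ρ x (ρ y u))
    (hμ : ∀ (x y : A) (u : A'), μ (m x y) u = μ y (μ x u))
    (hρμ : ∀ (x y : A) (u : A'), ρ x (μ y u) = μ y (ρ x u))
    (h1 : ∀ (x : A) (u v : A'), ρ x (m' u v) = m' (ρ x u) v)
    (h2 : ∀ (x : A) (u v : A'), m' u (ρ x v) = m' (μ x u) v)
    (h3 : ∀ (x : A) (u v : A'), m' u (μ x v) = μ x (m' u v))
    (D : A →ₗ[K] A')
    (hD : ∀ x y : A, D (m x y) = ρ x (D y) + μ y (D x) + m' (D x) (D y)) :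
    (∀ (x y : A) (u : A'), rhoD m' ρ D (m x y) u = rhoD m' ρ D x (rhoD m' ρ D y u)) ∧
    (∀ (x y : A) (u : A'), muD m' μ D (m x y) u = muD m' μ D y (muD m' μ D x u)) ∧
    (∀ (x y : A) (u : A'), rhoD m' ρ D x (muD m' μ D y u) = muD m' μ D y (rhoD m' ρ D x u)) ∧
    (∀ (x : A) (u v : A'), rhoD m' ρ D x (m' u v) = m' (rhoD m' ρ D x u) v) ∧
    (∀ (x : A) (u v : A'), m' u (rhoD m' ρ D x v) = m' (muD m' μ D x u) v) ∧
    (∀ (x : A) (u v : A'), m' u (muD m' μ D x v) = muD m' μ D x (m' u v)) := by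
  refine ⟨?_, ?_, ?_, ?_, ?_, ?_⟩
  · intro x y u
    simp only [rhoD, map_add, hρ, hD, LinearMap.add_apply, h1, h2, assocA']
    abel
  · intro x y u
    simp only [muD, map_add, hμ, hD, LinearMap.add_apply, h2, h3, assocA']
    abel
  · intro x y u
    simp only [rhoD, muD, map_add, LinearMap.add_apply, hρμ, h1, h3, ← assocA']
    abel
  · intro x u v
    simp only [rhoD, map_add, LinearMap.add_apply, h1, ← assocA']
  · intro x u v
    simp only [rhoD, muD, map_add, LinearMap.add_apply, h2, ← assocA']
  · intro x u v
    simp only [muD, map_add, h3, assocA']
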